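/- arXiv:1605.05204 — 5 statements merged into one kernel-verified Lean document; each statement's English description precedes it below -/
import Mathlib

section
/- Let θ be an arithmetic function with θ(1) ≥ 2 and θ(n) ≥ P⁺(n) for n ≥ 2, where P⁺(n) is the largest prime factor of n. Let 𝔅 be the set of positive integers containing 1 and all n ≥ 2 with prime factorization n = p₁^{α₁}⋯p_k^{α_k}, p₁ < ⋯ < p_k, satisfying p_{j+1} ≤ θ(p₁^{α₁}⋯p_j^{α_j}) for 0 ≤ j < k (empty product = 1). Let 𝔇 be the set of positive integers containing 1 and all n ≥ 2 whose divisors 1 = d₁ < d₂ < ⋯ < d_{τ(n)} = n satisfy d_{j+1} ≤ θ(d_j) for 1 ≤ j < τ(n). Then 𝔇 ⊆ 𝔅. -/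
open scoped Classical ENNReal

noncomputable section

/-- Largest prime factor of `n` (0 for `n = 1`). -/
def maxPrimeFac (n : ℕ) : ℕ := n.primeFactors.sup id

/-- Validity conditions (3) on `θ`: `θ(1) ≥ 2` and `θ(n) ≥ P⁺(n)` for `n ≥ 2`. -/
def ThetaOK (θ : ℕ → ℝ≥0∞) : Prop :=
  2 ≤ θ 1 ∧ ∀ n, 2 ≤ n → (maxPrimeFac n : ℝ≥0∞) ≤ θ n

/-- Membership in `𝔅`: `n ≥ 1` and each prime `p` of `n` satisfies
`p ≤ θ(prefix of the factorization of n below p)`. -/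
def Bmem (θ : ℕ → ℝ≥0∞) (n : ℕ) : Prop :=
  0 < n ∧ ∀ p ∈ n.primeFactors,
    (p : ℝ≥0∞) ≤ θ (∏ q ∈ n.primeFactors.filter (fun q => q < p), q ^ (n.factorization q))

/-- Membership in `𝔇`: `n ≥ 1` and each divisor `d < n` of `n` is followed by a
divisor `e` of `n` with `d < e ≤ θ(d)`. -/
def Dmem (θ : ℕ → ℝ≥0∞) (n : ℕ) : Prop :=
  0 < n ∧ ∀ d, d ∣ n → d < n → ∃ e, e ∣ n ∧ d < e ∧ (e : ℝ≥0∞) ≤ θ d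

end


/-! Let `p` be a prime factor of `n ∈ 𝔇` and let `m` be the part of `n` made of the primes
below `p`. Then `m` is a proper divisor of `n`, so `𝔇` provides a divisor `e` of `n` with
`m < e ≤ θ(m)`. Every divisor of `n` all of whose prime factors are below `p` divides `m`, so
`e` has a prime factor `q ≥ p`, and `p ≤ q ≤ e ≤ θ(m)`. -/

open Finset

namespace Nat

variable (P : ℕ → Prop) [DecidablePred P] {n : ℕ}

lemma prod_filter_primeFactors_pow_factorization_dvd :
    ∏ q ∈ n.primeFactors.filter P, q ^ n.factorization q ∣ n := by
  rcases eq_or_ne n 0 with rfl | hn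
  · exact dvd_zero _
  conv_rhs => rw [prod_primeFactors_pow_factorization hn]
  exact prod_dvd_prod_of_subset _ _ _ (filter_subset _ _)

lemma prime_not_dvd_prod_filter_primeFactors_pow_factorization {p : ℕ} (hp : p.Prime)
    (hPp : ¬ P p) : ¬ p ∣ ∏ q ∈ n.primeFactors.filter P, q ^ n.factorization q := by
  refine hp.prime.not_dvd_finsetProd fun q hq hpq => hPp ?_
  obtain ⟨hqn, hPq⟩ := mem_filter.mp hq
  rwa [(prime_dvd_prime_iff_eq hp (prime_of_mem_primeFactors hqn)).mp (hp.dvd_of_dvd_pow hpq)]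

lemma dvd_prod_filter_primeFactors_pow_factorization {e : ℕ} (he : e ∣ n) (hn : n ≠ 0)
    (hPe : ∀ q ∈ e.primeFactors, P q) :
    e ∣ ∏ q ∈ n.primeFactors.filter P, q ^ n.factorization q := by
  have he0 : e ≠ 0 := ne_zero_of_dvd_ne_zero hn he
  have hsub : e.primeFactors ⊆ n.primeFactors.filter P := fun q hq =>
    mem_filter.mpr ⟨primeFactors_mono he hn hq, hPe q hq⟩
  have hle : e.factorization ≤ n.factorization := (factorization_le_iff_dvd he0 hn).mpr he
  calc e = ∏ q ∈ e.primeFactors, q ^ e.factorization q := prod_primeFactors_pow_factorization he0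
    _ ∣ ∏ q ∈ e.primeFactors, q ^ n.factorization q :=
      prod_dvd_prod_of_dvd _ _ fun q _ => pow_dvd_pow q (hle q)
    _ ∣ _ := prod_dvd_prod_of_subset _ _ _ hsub

end Nat

theorem stmt0_general (θ : ℕ → ℝ≥0∞) (n : ℕ) (hn : Dmem θ n) : Bmem θ n := by
  obtain ⟨hn0, hD⟩ := hn
  refine ⟨hn0, fun p hp => ?_⟩
  have hpp : p.Prime := Nat.prime_of_mem_primeFactors hp
  set m := ∏ q ∈ n.primeFactors.filter (· < p), q ^ n.factorization q
  have hmn : m ∣ n := Nat.prod_filter_primeFactors_pow_factorization_dvd _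
  have hpm : ¬ p ∣ m :=
    Nat.prime_not_dvd_prod_filter_primeFactors_pow_factorization _ hpp (lt_irrefl p)
  have hm_lt : m < n := (Nat.le_of_dvd hn0 hmn).lt_of_ne fun h =>
    hpm (h ▸ Nat.dvd_of_mem_primeFactors hp)
  obtain ⟨e, hen, hme, heθ⟩ := hD m hmn hm_lt
  have he0 : 0 < e := by omega
  obtain ⟨q, hqe, hpq⟩ : ∃ q ∈ e.primeFactors, p ≤ q := by
    by_contra! h
    have hem : e ∣ m := Nat.dvd_prod_filter_primeFactors_pow_factorization _ hen hn0.ne' h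
    have hm0 : m = 0 := Nat.eq_zero_of_dvd_of_lt hem hme
    exact hn0.ne' (Nat.eq_zero_of_zero_dvd (hm0 ▸ hmn))
  calc (p : ℝ≥0∞) ≤ e := by
        exact_mod_cast hpq.trans (Nat.le_of_dvd he0 (Nat.dvd_of_mem_primeFactors hqe))
    _ ≤ θ m := heθ

theorem stmt0 (θ : ℕ → ℝ≥0∞) (hθ : ThetaOK θ) (n : ℕ) (hn : Dmem θ n) : Bmem θ n :=
  stmt0_general θ n hn
end

section
/- Let θ be an arithmetic function with θ(1) ≥ 2, θ(n) ≥ P⁺(n) for n ≥ 2, and suppose θ satisfies θ(n) ≤ θ(n+1) for all n ≥ 1 and m·θ(n) ≤ θ(mn) for all coprime m, n ≥ 1. Then the set 𝔅 of integers n whose prime factorization n = p₁^{α₁}⋯p_k^{α_k} (p₁ < ⋯ < p_k) satisfies p_{j+1} ≤ θ(p₁^{α₁}⋯p_j^{α_j}) for 0 ≤ j < k equals the set 𝔇 of integers n whose divisors 1 = d₁ < ⋯ < d_{τ(n)} = n satisfy d_{j+1} ≤ θ(d_j) for 1 ≤ j < τ(n). -/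
open scoped Classical ENNReal

noncomputable section

/-!
A number in 𝔇 lies in 𝔅: for a prime `p ∣ n`, the part `m` of `n` made of the primes below `p`
is a proper divisor, and the divisor of `n` following `m` cannot have all its prime factors
below `p` (it would divide `m`), so `p` is at most that divisor, hence at most `θ m`.

Conversely, for `n ∈ 𝔅` write `n = m * p ^ α` with `p` the largest prime factor of `n`; then
`m ∈ 𝔅`, so `m ∈ 𝔇` by induction, and `𝔇` is stable under `m ↦ m * p ^ α` when `p ∤ m` and
`p ≤ θ m`. A divisor `f * p ^ i` with `f < m` is followed by `g * p ^ i`, where `g` follows `f`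
in `m`, because `g * p ^ i ≤ p ^ i * θ f ≤ θ (f * p ^ i)`. For the divisor `m * p ^ i` with
`i < α`, take the largest divisor `f` of `m` with `f * p ≤ m` and its successor `g` in `m`:
then `m < g * p`, and `g * p ^ (i + 1) ≤ θ (f * p ^ (i + 1)) ≤ θ (m * p ^ i)` by
monotonicity. If there is no such `f`, i.e. `m < p`, then `p ^ (i + 1)` itself works.
-/

namespace Nat

def lowerPart (n p : ℕ) : ℕ :=
  ∏ q ∈ n.primeFactors.filter (· < p), q ^ n.factorization q

variable {n p : ℕ}

lemma filter_factorization_le : n.factorization.filter (· < p) ≤ n.factorization := fun _ => by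
  rw [Finsupp.filter_apply]; split_ifs <;> simp

lemma lowerPart_eq_prod : n.lowerPart p = (n.factorization.filter (· < p)).prod (· ^ ·) := by
  rw [lowerPart, Finsupp.prod, Finsupp.support_filter, support_factorization]
  exact Finset.prod_congr rfl fun q hq => by
    simp [(Finset.mem_filter.mp hq).2]

lemma factorization_lowerPart : (n.lowerPart p).factorization = n.factorization.filter (· < p) := by
  rw [lowerPart_eq_prod]
  exact factorization_prod_pow_eq_self_of_le_factorization filter_factorization_le

lemma lowerPart_dvd : n.lowerPart p ∣ n := by
  rw [lowerPart_eq_prod]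
  exact prod_pow_dvd_of_le_factorization filter_factorization_le

lemma lowerPart_pos : 0 < n.lowerPart p :=
  Finset.prod_pos fun _ hq => pow_pos (pos_of_mem_primeFactors (Finset.mem_filter.mp hq).1) _

lemma primeFactors_lowerPart : (n.lowerPart p).primeFactors = n.primeFactors.filter (· < p) := by
  rw [← support_factorization, factorization_lowerPart, Finsupp.support_filter,
    support_factorization]

lemma lowerPart_lowerPart {q : ℕ} (hqp : q ≤ p) : (n.lowerPart p).lowerPart q = n.lowerPart q := by
  refine factorization_inj lowerPart_pos.ne' lowerPart_pos.ne' ?_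
  ext r
  simp only [factorization_lowerPart, Finsupp.filter_apply]
  split_ifs <;> first | rfl | omega

lemma not_dvd_lowerPart (hp : p.Prime) : ¬ p ∣ n.lowerPart p := fun h => by
  have := (mem_primeFactors.mpr ⟨hp, h, lowerPart_pos.ne'⟩)
  simp [primeFactors_lowerPart] at this

lemma lowerPart_lt (hp : p ∈ n.primeFactors) : n.lowerPart p < n := by
  have hn : 0 < n := pos_of_ne_zero (mem_primeFactors.mp hp).2.2
  refine (le_of_dvd hn lowerPart_dvd).lt_of_ne fun h => ?_
  exact not_dvd_lowerPart (prime_of_mem_primeFactors hp) (h ▸ dvd_of_mem_primeFactors hp)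

lemma dvd_lowerPart {e : ℕ} (he : e ∣ n) (hn : n ≠ 0) (hep : ∀ q ∈ e.primeFactors, q < p) :
    e ∣ n.lowerPart p := by
  have he0 : e ≠ 0 := ne_zero_of_dvd_ne_zero hn he
  rw [← factorization_le_iff_dvd he0 lowerPart_pos.ne', factorization_lowerPart]
  intro r
  rw [Finsupp.filter_apply]
  split_ifs with hr
  · exact (factorization_le_iff_dvd he0 hn).mpr he r
  · rw [nonpos_iff_eq_zero, ← Finsupp.notMem_support_iff, support_factorization]
    exact fun h => hr (hep r h)

lemma lowerPart_eq_ordCompl (hn : n ≠ 0) (hp : ∀ q ∈ n.primeFactors, q ≤ p) :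
    n.lowerPart p = ordCompl[p] n := by
  refine factorization_inj lowerPart_pos.ne' (ordCompl_pos p hn).ne' ?_
  ext r
  rw [factorization_lowerPart, factorization_ordCompl, Finsupp.filter_apply, Finsupp.erase_apply]
  split_ifs with hrp hrp'
  · omega
  · rfl
  · rfl
  · rw [eq_comm, ← Finsupp.notMem_support_iff, support_factorization]
    exact fun hr => by have := hp r hr; omega

lemma coprime_pow_of_dvd_of_not_dvd {f m : ℕ} (hp : p.Prime) (hpm : ¬ p ∣ m) (hf : f ∣ m)
    (j : ℕ) : f.Coprime (p ^ j) :=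
  ((hp.coprime_iff_not_dvd.mpr hpm).symm.coprime_dvd_left hf).pow_right j

end Nat

section

variable {θ : ℕ → ℝ≥0∞}

lemma natCast_mul_le_of_coprime
    (hmul : ∀ m n, 1 ≤ m → 1 ≤ n → Nat.Coprime m n → (m : ℝ≥0∞) * θ n ≤ θ (m * n))
    {f g k : ℕ} (hf : 0 < f) (hk : 0 < k) (hfk : f.Coprime k) (hg : (g : ℝ≥0∞) ≤ θ f) :
    ((g * k : ℕ) : ℝ≥0∞) ≤ θ (f * k) :=
  calc ((g * k : ℕ) : ℝ≥0∞) = k * g := by push_cast; ring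
    _ ≤ k * θ f := by gcongr
    _ ≤ θ (k * f) := hmul k f hk hf hfk.symm
    _ = θ (f * k) := by rw [mul_comm]

lemma Dmem.exists_dvd_mul_pow_succ
    (hmul : ∀ m n, 1 ≤ m → 1 ≤ n → Nat.Coprime m n → (m : ℝ≥0∞) * θ n ≤ θ (m * n))
    (hmono : MonotoneOn θ (Set.Ici 1)) {m p : ℕ} (hD : Dmem θ m) (hp : p.Prime)
    (hpm : ¬ p ∣ m) (hpθ : (p : ℝ≥0∞) ≤ θ m) (i : ℕ) :
    ∃ e, e ∣ m * p ^ (i + 1) ∧ m * p ^ i < e ∧ (e : ℝ≥0∞) ≤ θ (m * p ^ i) := by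
  have hm := hD.1
  have hp0 := hp.pos
  rcases lt_or_ge m p with hmp | hpm_le
  · refine ⟨p ^ (i + 1), dvd_mul_left _ _, ?_, ?_⟩
    · rw [pow_succ']
      gcongr
    · rw [pow_succ']
      exact natCast_mul_le_of_coprime hmul hm (pow_pos hp0 i)
        (Nat.coprime_pow_of_dvd_of_not_dvd hp hpm dvd_rfl i) hpθ
  · obtain ⟨f, hf, hfmax⟩ := (m.divisors.filter (· * p ≤ m)).exists_max_image id
      ⟨1, by simp [hm.ne', hpm_le]⟩
    simp only [Finset.mem_filter, Nat.mem_divisors, id] at hf hfmax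
    obtain ⟨⟨hfm, -⟩, hfp⟩ := hf
    have hf0 : 0 < f := Nat.pos_of_dvd_of_pos hfm hm
    obtain ⟨g, hgm, hfg, hgθ⟩ := hD.2 f hfm ((lt_mul_of_one_lt_right hf0 hp.one_lt).trans_le hfp)
    have hgp : m < g * p := by
      by_contra! h
      exact (hfmax g ⟨⟨hgm, hm.ne'⟩, h⟩).not_gt hfg
    refine ⟨g * p ^ (i + 1), mul_dvd_mul hgm dvd_rfl, ?_, ?_⟩
    · calc m * p ^ i < g * p * p ^ i := by gcongr
        _ = g * p ^ (i + 1) := by ring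
    · calc ((g * p ^ (i + 1) : ℕ) : ℝ≥0∞) ≤ θ (f * p ^ (i + 1)) :=
            natCast_mul_le_of_coprime hmul hf0 (pow_pos hp0 _)
              (Nat.coprime_pow_of_dvd_of_not_dvd hp hpm hfm _) hgθ
        _ ≤ θ (m * p ^ i) := by
          refine hmono (show 0 < _ by positivity) (show 0 < _ by positivity) ?_
          calc f * p ^ (i + 1) = f * p * p ^ i := by ring
            _ ≤ m * p ^ i := by gcongr

theorem Dmem.mul_prime_pow
    (hmul : ∀ m n, 1 ≤ m → 1 ≤ n → Nat.Coprime m n → (m : ℝ≥0∞) * θ n ≤ θ (m * n))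
    (hmono : MonotoneOn θ (Set.Ici 1)) {m p : ℕ} (hD : Dmem θ m) (hp : p.Prime)
    (hpm : ¬ p ∣ m) (hpθ : (p : ℝ≥0∞) ≤ θ m) (a : ℕ) : Dmem θ (m * p ^ a) := by
  have hp0 := hp.pos
  refine ⟨mul_pos hD.1 (pow_pos hp0 a), fun d hd hdlt => ?_⟩
  obtain ⟨f, q, hf, hq, rfl⟩ := Nat.dvd_mul.mp hd
  obtain ⟨i, hia, rfl⟩ := (Nat.dvd_prime_pow hp).mp hq
  rcases (Nat.le_of_dvd hD.1 hf).lt_or_eq with hfm | rfl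
  · obtain ⟨g, hgm, hfg, hgθ⟩ := hD.2 f hf hfm
    refine ⟨g * p ^ i, mul_dvd_mul hgm (pow_dvd_pow p hia), by gcongr, ?_⟩
    exact natCast_mul_le_of_coprime hmul (Nat.pos_of_dvd_of_pos hf hD.1) (pow_pos hp0 i)
      (Nat.coprime_pow_of_dvd_of_not_dvd hp hpm hf i) hgθ
  · have hi : i < a := hia.lt_of_ne (by rintro rfl; exact lt_irrefl _ hdlt)
    obtain ⟨e, he, hlt, hle⟩ := hD.exists_dvd_mul_pow_succ hmul hmono hp hpm hpθ i
    exact ⟨e, he.trans (mul_dvd_mul_left f (pow_dvd_pow p hi)), hlt, hle⟩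

theorem Bmem.lowerPart {n : ℕ} (hB : Bmem θ n) (p : ℕ) : Bmem θ (n.lowerPart p) := by
  refine ⟨Nat.lowerPart_pos, fun q hq => ?_⟩
  rw [Nat.primeFactors_lowerPart, Finset.mem_filter] at hq
  change (q : ℝ≥0∞) ≤ θ ((n.lowerPart p).lowerPart q)
  rw [Nat.lowerPart_lowerPart hq.2.le]
  exact hB.2 q hq.1

theorem Bmem.dmem
    (hmul : ∀ m n, 1 ≤ m → 1 ≤ n → Nat.Coprime m n → (m : ℝ≥0∞) * θ n ≤ θ (m * n))
    (hmono : MonotoneOn θ (Set.Ici 1)) {n : ℕ} (hB : Bmem θ n) : Dmem θ n := by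
  induction n using Nat.strong_induction_on with
  | _ n ih =>
  rcases n.primeFactors.eq_empty_or_nonempty with h | hne
  · obtain rfl : n = 1 := (Nat.primeFactors_eq_empty.mp h).resolve_left hB.1.ne'
    exact ⟨one_pos, fun d hd hd1 => absurd (Nat.dvd_one.mp hd) hd1.ne⟩
  set p := n.primeFactors.max' hne
  have hp : p ∈ n.primeFactors := Finset.max'_mem _ _
  have hn : n = n.lowerPart p * p ^ n.factorization p := by
    rw [Nat.lowerPart_eq_ordCompl hB.1.ne' fun q hq => Finset.le_max' _ q hq, mul_comm,
      Nat.ordProj_mul_ordCompl_eq_self]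
  rw [hn]
  have hpp := Nat.prime_of_mem_primeFactors hp
  exact (ih _ (Nat.lowerPart_lt hp) (hB.lowerPart p)).mul_prime_pow hmul hmono hpp
    (Nat.not_dvd_lowerPart hpp) (hB.2 p hp) _

theorem Dmem.bmem {n : ℕ} (hD : Dmem θ n) : Bmem θ n := by
  refine ⟨hD.1, fun p hp => ?_⟩
  obtain ⟨e, hen, hlt, heθ⟩ := hD.2 _ Nat.lowerPart_dvd (Nat.lowerPart_lt hp)
  have hpe : p ≤ e := by
    by_contra! hep
    refine hlt.not_ge (Nat.le_of_dvd Nat.lowerPart_pos ?_)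
    exact Nat.dvd_lowerPart hen hD.1.ne' fun q hq => (Nat.le_of_mem_primeFactors hq).trans_lt hep
  exact (Nat.cast_le.mpr hpe).trans heθ

end

theorem stmt1_general (θ : ℕ → ℝ≥0∞)
    (hmono : ∀ n, 1 ≤ n → θ n ≤ θ (n + 1))
    (hmul : ∀ m n, 1 ≤ m → 1 ≤ n → Nat.Coprime m n → (m : ℝ≥0∞) * θ n ≤ θ (m * n)) :
    ∀ n, Bmem θ n ↔ Dmem θ n := fun _ =>
  ⟨Bmem.dmem hmul (monotoneOn_nat_Ici_of_le_succ hmono), Dmem.bmem⟩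

theorem stmt1 (θ : ℕ → ℝ≥0∞) (hθ : ThetaOK θ)
    (hmono : ∀ n, 1 ≤ n → θ n ≤ θ (n + 1))
    (hmul : ∀ m n, 1 ≤ m → 1 ≤ n → Nat.Coprime m n → (m : ℝ≥0∞) * θ n ≤ θ (m * n)) :
    ∀ n, Bmem θ n ↔ Dmem θ n :=
  stmt1_general θ hmono hmul
end
end

section
/- Let θ be an arithmetic function with θ(1) ≥ 2 and θ(n) ≥ P⁺(n) for n ≥ 2, and let χ be the characteristic function of the set 𝔅 defined by the condition p_{j+1} ≤ θ(p₁^{α₁}⋯p_j^{α_j}). Then for every real x ≥ 0, ⌊x⌋ = Σ_{n ≤ x} χ(n) · Φ(x/n, θ(n)), where Φ(y, z) = #{1 ≤ m ≤ y : all prime factors of m exceed z} and Φ(y, ∞) = 1 for y ≥ 1. -/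
/-!
Every `m ≥ 1` factors uniquely as `m = n * r` with `n ∈ 𝔅` and every prime of `r` exceeding
`θ(n)`; grouping `m ≤ x` by `n`, the admissible `r` are counted by `Φ(x / n, θ(n))`.
Existence: starting from `n = 1`, move the least prime power of `r` into `n` as long as its prime
is at most `θ(n)`. Uniqueness: `θ(n) ≥ P⁺(n)` makes `n` an initial segment of the factorisation
of `m`, so two candidates are comparable under divisibility, and the least prime of their quotient
would be both `> θ(n)` and `≤ θ(n)`.
-/

open scoped Classical ENNReal

noncomputable section

/-- `Φ(x, y)`: number of `1 ≤ m ≤ x` all of whose prime factors exceed `y`.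
(When `y = ∞` only `m = 1` qualifies, so `Φ(x, ∞) = 1` for `x ≥ 1`.) -/
noncomputable def Phi (x : ℝ) (y : ℝ≥0∞) : ℕ :=
  ((Finset.Icc 1 ⌊x⌋₊).filter (fun m => ∀ p : ℕ, p.Prime → p ∣ m → y < (p : ℝ≥0∞))).card

def smoothPart (m p : ℕ) : ℕ := ∏ q ∈ m.primeFactors.filter (fun q => q < p), q ^ m.factorization q

def IsRough (y : ℝ≥0∞) (r : ℕ) : Prop := ∀ p : ℕ, p.Prime → p ∣ r → y < (p : ℝ≥0∞)

section SmoothPart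

variable {n r p : ℕ}

lemma smoothPart_dvd_smoothPart (m : ℕ) {a b : ℕ} (hab : a ≤ b) :
    smoothPart m a ∣ smoothPart m b :=
  Finset.prod_dvd_prod_of_subset _ _ _ (Finset.monotone_filter_right _ fun _ _ h => h.trans_le hab)

lemma smoothPart_eq_self (hn : n ≠ 0) (h : ∀ q ∈ n.primeFactors, q < p) : smoothPart n p = n := by
  rw [smoothPart, Finset.filter_true_of_mem h, ← Nat.prod_factorization_eq_prod_primeFactors,
    Nat.prod_factorization_pow_eq_self hn]

lemma smoothPart_mul_of_le (hn : n ≠ 0) (hr : r ≠ 0) (h : ∀ q ∈ r.primeFactors, p ≤ q) :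
    smoothPart (n * r) p = smoothPart n p := by
  have hlow : ∀ q < p, r.factorization q = 0 := fun q hq =>
    Finsupp.notMem_support_iff.mp fun hqr => (h q (Nat.support_factorization r ▸ hqr)).not_gt hq
  have hpf : (n * r).primeFactors.filter (fun q => q < p)
      = n.primeFactors.filter (fun q => q < p) := by
    ext q
    simp only [Finset.mem_filter, Nat.primeFactors_mul hn hr, Finset.mem_union, and_congr_left_iff]
    exact fun hq => or_iff_left fun hqr => (h q hqr).not_gt hq
  rw [smoothPart, smoothPart, hpf]
  refine Finset.prod_congr rfl fun q hq => ?_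
  rw [Nat.factorization_mul hn hr, Finsupp.add_apply, hlow q (Finset.mem_filter.mp hq).2, add_zero]

end SmoothPart

section Decomposition

variable {θ : ℕ → ℝ≥0∞} {m n r : ℕ}

lemma bmem_one : Bmem θ 1 := ⟨one_pos, by simp⟩

lemma Bmem.mul_prime_pow (hn : Bmem θ n) {p k : ℕ} (hp : p.Prime) (hk : k ≠ 0)
    (hlt : ∀ q ∈ n.primeFactors, q < p) (hpθ : (p : ℝ≥0∞) ≤ θ n) : Bmem θ (n * p ^ k) := by
  have hn0 : n ≠ 0 := hn.1.ne'
  have hpk0 : p ^ k ≠ 0 := pow_ne_zero _ hp.ne_zero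
  have hsmooth : ∀ q ≤ p, smoothPart (n * p ^ k) q = smoothPart n q := fun q hq =>
    smoothPart_mul_of_le hn0 hpk0 (by simp [Nat.primeFactors_prime_pow hk hp, hq])
  refine ⟨Nat.pos_of_ne_zero (mul_ne_zero hn0 hpk0), fun q hq => ?_⟩
  rw [Nat.primeFactors_mul hn0 hpk0, Nat.primeFactors_prime_pow hk hp, Finset.mem_union,
    Finset.mem_singleton] at hq
  rcases hq with hq | rfl
  · rw [← smoothPart, hsmooth q (hlt q hq).le]
    exact hn.2 q hq
  · rwa [← smoothPart, hsmooth _ le_rfl, smoothPart_eq_self hn0 hlt]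

/-- The primes of `r` not exceeding `θ(n)` are moved into `n` one at a time, least first. -/
lemma exists_bmem_mul_isRough_of_lt (hn : Bmem θ n) (hr : r ≠ 0)
    (hsep : ∀ q ∈ n.primeFactors, ∀ q' ∈ r.primeFactors, q < q') :
    ∃ n' r', Bmem θ n' ∧ IsRough (θ n') r' ∧ n' * r' = n * r := by
  induction r using Nat.strong_induction_on generalizing n with
  | _ r ih =>
  by_cases hrough : IsRough (θ n) r
  · exact ⟨n, r, hn, hrough, rfl⟩
  obtain ⟨p₀, hp₀, hp₀r, hp₀θ⟩ : ∃ p₀ : ℕ, p₀.Prime ∧ p₀ ∣ r ∧ (p₀ : ℝ≥0∞) ≤ θ n := by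
    simpa [IsRough] using hrough
  set p := r.minFac
  have hp : p.Prime := Nat.minFac_prime fun h => hp₀.one_lt.ne' (Nat.dvd_one.mp (h ▸ hp₀r))
  have hpr : p ∈ r.primeFactors := Nat.mem_primeFactors.mpr ⟨hp, r.minFac_dvd, hr⟩
  have hk : r.factorization p ≠ 0 := Finsupp.mem_support_iff.mp (Nat.support_factorization r ▸ hpr)
  have hbmem : Bmem θ (n * p ^ r.factorization p) := hn.mul_prime_pow hp hk
    (fun q hq => hsep q hq p hpr)
    (le_trans (by exact_mod_cast Nat.minFac_le_of_dvd hp₀.two_le hp₀r) hp₀θ)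
  have hlt : ordCompl[p] r < r :=
    Nat.div_lt_self (Nat.pos_of_ne_zero hr) (Nat.one_lt_pow hk hp.one_lt)
  have hcompl : ordCompl[p] r ≠ 0 := (Nat.ordCompl_pos p hr).ne'
  obtain ⟨n', r', hn', hr', heq⟩ := ih _ hlt hbmem hcompl fun q hq q' hq' => by
    have hq'r : q' ∈ r.primeFactors := Nat.primeFactors_mono (Nat.ordCompl_dvd r p) hr hq'
    have hpq' : p < q' := by
      refine lt_of_le_of_ne (Nat.minFac_le_of_dvd (Nat.prime_of_mem_primeFactors hq').two_le
        (Nat.dvd_of_mem_primeFactors hq'r)) ?_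
      rintro rfl
      exact Nat.not_dvd_ordCompl hp hr (Nat.dvd_of_mem_primeFactors hq')
    rw [Nat.primeFactors_mul hn.1.ne' (pow_ne_zero _ hp.ne_zero), Nat.primeFactors_prime_pow hk hp,
      Finset.mem_union, Finset.mem_singleton] at hq
    rcases hq with hq | rfl
    · exact hsep q hq q' hq'r
    · exact hpq'
  exact ⟨n', r', hn', hr', by rw [heq, mul_assoc, Nat.ordProj_mul_ordCompl_eq_self]⟩

lemma exists_bmem_mul_isRough (hm : m ≠ 0) : ∃ n r, Bmem θ n ∧ IsRough (θ n) r ∧ n * r = m := by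
  simpa using exists_bmem_mul_isRough_of_lt (θ := θ) bmem_one hm (by simp)

end Decomposition

section Uniqueness

variable {θ : ℕ → ℝ≥0∞} {m n n' r r' : ℕ}

lemma ThetaOK.maxPrimeFac_le (hθ : ThetaOK θ) (n : ℕ) : (maxPrimeFac n : ℝ≥0∞) ≤ θ n := by
  rcases lt_or_ge n 2 with hn | hn
  · interval_cases n <;> simp [maxPrimeFac]
  · exact hθ.2 n hn

lemma le_maxPrimeFac {q : ℕ} (hq : q ∈ n.primeFactors) : q ≤ maxPrimeFac n :=
  Finset.le_sup (f := id) hq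

lemma ThetaOK.maxPrimeFac_lt (hθ : ThetaOK θ) {p : ℕ} (hp : θ n < p) : maxPrimeFac n < p := by
  exact_mod_cast (hθ.maxPrimeFac_le n).trans_lt hp

lemma smoothPart_mul_isRough (hθ : ThetaOK θ) (hn : n ≠ 0) (hr0 : r ≠ 0) (hr : IsRough (θ n) r) :
    smoothPart (n * r) (maxPrimeFac n + 1) = n := by
  rw [smoothPart_mul_of_le hn hr0 fun q hq => hθ.maxPrimeFac_lt
      (hr q (Nat.prime_of_mem_primeFactors hq) (Nat.dvd_of_mem_primeFactors hq)),
    smoothPart_eq_self hn fun q hq => Nat.lt_succ_of_le (le_maxPrimeFac hq)]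

/-- A proper extension `n * s` of `n` dividing `n * r` would have its least new prime `p` in
`r`, so `p > θ(n)`; but `n * s ∈ 𝔅` forces `p ≤ θ(n)`. -/
lemma eq_of_dvd_of_bmem (hθ : ThetaOK θ) (hn : n ≠ 0) (hr : IsRough (θ n) r) (hn' : Bmem θ n')
    (hn'm : n' ∣ n * r) (hnn' : n ∣ n') : n = n' := by
  obtain ⟨s, rfl⟩ := hnn'
  have hs0 : s ≠ 0 := right_ne_zero_of_mul hn'.1.ne'
  have hsr : s ∣ r := Nat.dvd_of_mul_dvd_mul_left (Nat.pos_of_ne_zero hn) hn'm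
  by_contra hne
  have hs1 : s ≠ 1 := fun h => hne (by rw [h, mul_one])
  set p := s.minFac
  have hp : p.Prime := Nat.minFac_prime hs1
  have hθp : θ n < p := hr p hp (s.minFac_dvd.trans hsr)
  have hsmooth : smoothPart (n * s) p = n := by
    rw [smoothPart_mul_of_le hn hs0 fun q hq => Nat.minFac_le_of_dvd
        (Nat.prime_of_mem_primeFactors hq).two_le (Nat.dvd_of_mem_primeFactors hq)]
    exact smoothPart_eq_self hn fun q hq => (le_maxPrimeFac hq).trans_lt (hθ.maxPrimeFac_lt hθp)
  have hpmem : p ∈ (n * s).primeFactors :=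
    Nat.mem_primeFactors.mpr ⟨hp, s.minFac_dvd.trans (dvd_mul_left s n), hn'.1.ne'⟩
  have hpθ := hn'.2 p hpmem
  rw [← smoothPart, hsmooth] at hpθ
  exact hpθ.not_gt hθp

/-- Both `n` and `n'` are initial segments `smoothPart m a` of `m`, hence one divides the other. -/
lemma eq_of_bmem_mul_isRough (hθ : ThetaOK θ) (hm : m ≠ 0) (hn : Bmem θ n) (hn' : Bmem θ n')
    (hr : IsRough (θ n) r) (hr' : IsRough (θ n') r') (h : n * r = m) (h' : n' * r' = m) :
    n = n' := by
  have hseg : smoothPart m (maxPrimeFac n + 1) = n := by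
    rw [← h]; exact smoothPart_mul_isRough hθ hn.1.ne' (right_ne_zero_of_mul (h ▸ hm)) hr
  have hseg' : smoothPart m (maxPrimeFac n' + 1) = n' := by
    rw [← h']; exact smoothPart_mul_isRough hθ hn'.1.ne' (right_ne_zero_of_mul (h' ▸ hm)) hr'
  rcases le_total (maxPrimeFac n) (maxPrimeFac n') with hle | hle
  · refine eq_of_dvd_of_bmem hθ hn.1.ne' hr hn' ⟨r', by rw [h, h']⟩ ?_
    rw [← hseg, ← hseg']
    exact smoothPart_dvd_smoothPart m (by omega)
  · refine (eq_of_dvd_of_bmem hθ hn'.1.ne' hr' hn ⟨r, by rw [h, h']⟩ ?_).symm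
    rw [← hseg, ← hseg']
    exact smoothPart_dvd_smoothPart m (by omega)

end Uniqueness

lemma sum_card_isRough_eq (θ : ℕ → ℝ≥0∞) (hθ : ThetaOK θ) (N : ℕ) :
    ∑ n ∈ (Finset.Icc 1 N).filter (Bmem θ ·), ((Finset.Icc 1 (N / n)).filter (IsRough (θ n))).card
      = N := by
  rw [← Finset.card_sigma]
  refine (Finset.card_bij (t := Finset.Icc 1 N) (fun x _ => x.1 * x.2) ?_ ?_ ?_).trans (by simp)
  · rintro ⟨n, r⟩ hx
    simp only [Finset.mem_sigma, Finset.mem_filter, Finset.mem_Icc] at hx ⊢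
    obtain ⟨⟨⟨hn1, -⟩, -⟩, ⟨hr1, hrN⟩, -⟩ := hx
    exact ⟨Nat.one_le_iff_ne_zero.mpr (by positivity), by
      rw [mul_comm]; exact Nat.mul_le_of_le_div n r N hrN⟩
  · rintro ⟨n, r⟩ hx ⟨n', r'⟩ hx' h
    simp only [Finset.mem_sigma, Finset.mem_filter, Finset.mem_Icc] at hx hx' h
    obtain ⟨⟨⟨hn1, -⟩, hn⟩, ⟨hr1, -⟩, hr⟩ := hx
    obtain ⟨⟨-, hn'⟩, -, hr'⟩ := hx'
    obtain rfl := eq_of_bmem_mul_isRough hθ (by positivity) hn hn' hr hr' rfl h.symm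
    obtain rfl := Nat.eq_of_mul_eq_mul_left hn1 h
    rfl
  · intro m hm
    rw [Finset.mem_Icc] at hm
    obtain ⟨n, r, hn, hr, rfl⟩ := exists_bmem_mul_isRough (θ := θ) (m := m) (by omega)
    have hr1 : 1 ≤ r :=
      Nat.one_le_iff_ne_zero.mpr (right_ne_zero_of_mul (Nat.one_le_iff_ne_zero.mp hm.1))
    refine ⟨⟨n, r⟩, ?_, rfl⟩
    simp only [Finset.mem_sigma, Finset.mem_filter, Finset.mem_Icc]
    exact ⟨⟨⟨hn.1, le_trans (Nat.le_mul_of_pos_right n hr1) hm.2⟩, hn⟩,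
      ⟨hr1, (Nat.le_div_iff_mul_le hn.1).mpr (by rw [mul_comm]; exact hm.2)⟩, hr⟩

theorem stmt3_general (θ : ℕ → ℝ≥0∞) (hθ : ThetaOK θ) (x : ℝ) :
    ⌊x⌋₊ = ∑ n ∈ (Finset.Icc 1 ⌊x⌋₊).filter (fun n => Bmem θ n), Phi (x / n) (θ n) := by
  simp only [Phi, Nat.floor_div_natCast]
  exact (sum_card_isRough_eq θ hθ ⌊x⌋₊).symm

theorem stmt3 (θ : ℕ → ℝ≥0∞) (hθ : ThetaOK θ) (x : ℝ) (hx : 0 ≤ x) :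
    ⌊x⌋₊ = ∑ n ∈ (Finset.Icc 1 ⌊x⌋₊).filter (fun n => Bmem θ n), Phi (x / n) (θ n) :=
  stmt3_general θ hθ x
end
end

section
/- Let θ satisfy θ(1) ≥ 2 and θ(n) ≥ P⁺(n) for n ≥ 2, and let χ be the characteristic function of the associated set 𝔅. Then for every N ≥ 1, Σ_{n ≤ N} (χ(n)/n) · Π_{p ≤ θ(n)} (1 − 1/p) ≤ 1; in particular the series L = Σ_{n ≥ 1} (χ(n)/n) Π_{p ≤ θ(n)} (1 − 1/p) converges to a value in [0, 1]. -/
open scoped Classical ENNReal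

noncomputable section

/-- The Euler factor `∏_{p ≤ y} (1 - 1/p)`, interpreted as `0` when `y = ∞`. -/
noncomputable def eulerWeight (y : ℝ≥0∞) : ℝ :=
  if y = ∞ then 0
  else ∏ p ∈ (Finset.range (⌊y.toReal⌋₊ + 1)).filter Nat.Prime, (1 - 1 / (p : ℝ))

/-- The general term of the series `L`. -/
noncomputable def Lterm (θ : ℕ → ℝ≥0∞) (n : ℕ) : ℝ :=
  (if Bmem θ n then (1 : ℝ) / n else 0) * eulerWeight (θ n)

/-- `B(x)`: number of `n ≤ x` belonging to `𝔅`. -/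
noncomputable def Bcount (θ : ℕ → ℝ≥0∞) (x : ℝ) : ℕ :=
  ((Finset.Icc 1 ⌊x⌋₊).filter (fun n => Bmem θ n)).card

/-!
For `n ∈ 𝔅` with `θ(n) < ∞` let `P(n)` be the product of the primes `≤ θ(n)`. An integer
`k` has at most one factorization `k = n m` with `n ∈ 𝔅` and `(m, P(n)) = 1`: such an `n` is
the `θ(n)`-smooth part of `k`, so of two candidates the one with smaller `θ` is the smooth part
of the other, and the defining condition of `𝔅` at the least prime where they differ fails.
Hence the sets `n · {m : (m, P(n)) = 1}` are disjoint, and their densities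
`φ(P(n)) / (n P(n)) = (1/n) ∏_{p ≤ θ(n)} (1 - 1/p)` sum to at most `1`.
-/

open Finset

namespace Nat

theorem card_filter_coprime_Ico_one_add_mul (P c : ℕ) :
    #{m ∈ Ico 1 (1 + P * c) | P.Coprime m} = c * totient P := by
  induction c with
  | zero => simp
  | succ c ih =>
    rw [mul_add_one, ← add_assoc,
      ← Ico_union_Ico_eq_Ico (b := 1 + P * c) (by omega) (by omega), filter_union,
      card_union_of_disjoint (disjoint_filter_filter (Ico_disjoint_Ico_consecutive _ _ _)), ih,
      filter_coprime_Ico_eq_totient, add_one_mul]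

theorem totient_primorial_div_primorial (x : ℕ) :
    (totient (primorial x) : ℝ) / primorial x = ∏ p ∈ primesLE x, (1 - 1 / (p : ℝ)) := by
  have h := congrArg (fun q : ℚ => (q : ℝ)) (totient_eq_mul_prod_factors (primorial x))
  push_cast at h
  rw [h, primeFactors_primorial, mul_div_cancel_left₀ _ (by exact_mod_cast primorial_ne_zero x)]
  simp only [one_div]

theorem lt_of_coprime_primorial {x m p : ℕ} (h : (primorial x).Coprime m)
    (hp : p ∈ m.primeFactors) : x < p := by
  by_contra! hpx
  refine h.disjoint_primeFactors.notMem_of_mem_right_finset hp ?_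
  rw [primeFactors_primorial, mem_primesLE]
  exact ⟨hpx, prime_of_mem_primeFactors hp⟩

theorem filter_factorization_mul_eq_left {n m : ℕ} (hn : n ≠ 0) (hm : m ≠ 0) (Q : ℕ → Prop)
    [DecidablePred Q] (hQn : ∀ p ∈ n.primeFactors, Q p) (hQm : ∀ p ∈ m.primeFactors, ¬ Q p) :
    (n * m).factorization.filter Q = n.factorization := by
  rw [Nat.factorization_mul hn hm, Finsupp.filter_add,
    (Finsupp.filter_eq_self_iff _ _).mpr fun p hp => hQn p (Finsupp.mem_support_iff.mpr hp),
    (Finsupp.filter_eq_zero_iff _ _).mpr fun p hp => ?_, add_zero]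
  by_contra h
  exact hQm p (Finsupp.mem_support_iff.mpr h) hp

theorem factorization_prod_primeFactors_filter_pow (n : ℕ) (Q : ℕ → Prop) [DecidablePred Q] :
    (∏ q ∈ n.primeFactors with Q q, q ^ n.factorization q).factorization =
      n.factorization.filter Q := by
  rw [← Nat.support_factorization, ← Finsupp.support_filter]
  refine Eq.trans ?_ (prod_pow_factorization_eq_self fun p hp => ?_)
  · refine congrArg _ (Finset.prod_congr rfl fun q hq => ?_)
    rw [Finsupp.support_filter, Finset.mem_filter] at hq
    rw [Finsupp.filter_apply_pos _ _ hq.2]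
  · rw [Finsupp.support_filter, Finset.mem_filter] at hp
    exact prime_of_mem_primeFactors hp.1

end Nat

theorem ThetaOK.le_of_mem_primeFactors {θ : ℕ → ℝ≥0∞} (hθ : ThetaOK θ) {n p : ℕ}
    (hp : p ∈ n.primeFactors) : (p : ℝ≥0∞) ≤ θ n := by
  have hn : 2 ≤ n := (Nat.prime_of_mem_primeFactors hp).two_le.trans (Nat.le_of_mem_primeFactors hp)
  exact le_trans (by exact_mod_cast Finset.le_sup (f := id) hp) (hθ.2 n hn)

theorem Bmem.eq_of_factorization_eq_filter {θ : ℕ → ℝ≥0∞} {n₁ n₂ : ℕ} (h₂ : Bmem θ n₂)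
    (hn₁ : n₁ ≠ 0) (h : n₁.factorization = n₂.factorization.filter fun q : ℕ => (q : ℝ≥0∞) ≤ θ n₁) :
    n₁ = n₂ := by
  by_cases hsmooth : ∀ p ∈ n₂.primeFactors, (p : ℝ≥0∞) ≤ θ n₁
  · rw [(Finsupp.filter_eq_self_iff _ _).mpr fun p hp =>
      hsmooth p (Finsupp.mem_support_iff.mpr hp)] at h
    exact Nat.factorization_inj hn₁ h₂.1.ne' h
  -- The least prime `p₀ > θ(n₁)` of `n₂` has `n₁` as the part of `n₂` below it: `p₀ ≤ θ(n₁)`.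
  push Not at hsmooth
  obtain ⟨hp₀, hθp₀⟩ := Nat.find_spec hsmooth
  have hlt_iff : ∀ q ∈ n₂.primeFactors, q < Nat.find hsmooth ↔ (q : ℝ≥0∞) ≤ θ n₁ := by
    refine fun q hq => ⟨fun hlt => ?_, fun hle => by exact_mod_cast hle.trans_lt hθp₀⟩
    by_contra! hgt
    exact Nat.find_min hsmooth hlt ⟨hq, hgt⟩
  have hlower : ∏ q ∈ n₂.primeFactors with q < Nat.find hsmooth, q ^ n₂.factorization q = n₁ := by
    refine Nat.eq_of_factorization_eq (Finset.prod_ne_zero_iff.mpr fun q hq => ?_) hn₁ fun q => ?_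
    · exact pow_ne_zero _ (Nat.prime_of_mem_primeFactors (Finset.mem_filter.mp hq).1).ne_zero
    rw [Nat.factorization_prod_primeFactors_filter_pow, h, Finsupp.filter_apply,
      Finsupp.filter_apply]
    by_cases hq : q ∈ n₂.primeFactors
    · exact if_congr (hlt_iff q hq) rfl rfl
    · rw [← Nat.support_factorization, Finsupp.notMem_support_iff] at hq
      simp only [hq, ite_self]
  have hp₀_le := h₂.2 _ hp₀
  rw [hlower] at hp₀_le
  exact (hθp₀.not_ge hp₀_le).elim

theorem Bmem.eq_of_mul_eq_mul {θ : ℕ → ℝ≥0∞} (hθ : ThetaOK θ) {n₁ n₂ m₁ m₂ : ℕ}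
    (h₁ : Bmem θ n₁) (h₂ : Bmem θ n₂) (hm₁ : m₁ ≠ 0) (hm₂ : m₂ ≠ 0)
    (hc₁ : ∀ p ∈ m₁.primeFactors, θ n₁ < p) (hc₂ : ∀ p ∈ m₂.primeFactors, θ n₂ < p)
    (h : n₁ * m₁ = n₂ * m₂) : n₁ = n₂ := by
  wlog hle : θ n₁ ≤ θ n₂ generalizing n₁ n₂ m₁ m₂
  · exact (this h₂ h₁ hm₂ hm₁ hc₂ hc₁ h.symm (le_of_not_ge hle)).symm
  have hsmooth_part : ∀ {n m : ℕ}, n ≠ 0 → m ≠ 0 → (∀ p ∈ m.primeFactors, θ n < p) →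
      (n * m).factorization.filter (fun q : ℕ => (q : ℝ≥0∞) ≤ θ n) = n.factorization :=
    fun hn hm hc => Nat.filter_factorization_mul_eq_left hn hm _
      (fun _ hp => hθ.le_of_mem_primeFactors hp) fun p hp => (hc p hp).not_ge
  refine Bmem.eq_of_factorization_eq_filter h₂ h₁.1.ne' ?_
  rw [← hsmooth_part h₁.1.ne' hm₁ hc₁, ← hsmooth_part h₂.1.ne' hm₂ hc₂, h]
  ext q
  simp only [Finsupp.filter_apply]
  split_ifs with hq₁ hq₂ <;> first | rfl | exact absurd (hq₁.trans hle) hq₂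

theorem sum_totient_div_mul_le_one {S : Finset ℕ} {P : ℕ → ℕ} (hS : ∀ n ∈ S, n ≠ 0)
    (hP : ∀ n ∈ S, P n ≠ 0)
    (hinj : ∀ n₁ ∈ S, ∀ n₂ ∈ S, ∀ m₁ m₂ : ℕ, m₁ ≠ 0 → m₂ ≠ 0 → (P n₁).Coprime m₁ →
      (P n₂).Coprime m₂ → n₁ * m₁ = n₂ * m₂ → n₁ = n₂) :
    ∑ n ∈ S, (Nat.totient (P n) : ℝ) / (n * P n) ≤ 1 := by
  -- The disjoint sets `n · {m ≥ 1 : (m, P n) = 1}` meet `[1, M]` in `M φ(P n) / (n P n)` points.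
  set M := ∏ n ∈ S, n * P n
  set R : ℕ → ℕ := fun n => ∏ k ∈ S.erase n, k * P k
  have hM : ∀ n ∈ S, n * P n * R n = M := fun n hn => mul_prod_erase S (fun k => k * P k) hn
  have hR : ∀ n ∈ S, R n ≠ 0 := fun n hn => prod_ne_zero_iff.mpr fun k hk =>
    mul_ne_zero (hS k (mem_of_mem_erase hk)) (hP k (mem_of_mem_erase hk))
  let T : ℕ → Finset ℕ := fun n =>
    {m ∈ Ico 1 (1 + P n * R n) | (P n).Coprime m}.image (n * ·)
  have hcard : ∀ n ∈ S, #(T n) = R n * Nat.totient (P n) := fun n hn => by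
    rw [card_image_of_injective _ (mul_right_injective₀ (hS n hn)),
      Nat.card_filter_coprime_Ico_one_add_mul]
  have hsub : S.biUnion T ⊆ Icc 1 M := by
    simp only [T, biUnion_subset, image_subset_iff, mem_filter, mem_Ico, mem_Icc]
    intro n hn m ⟨⟨hm₁, hm₂⟩, _⟩
    refine ⟨Nat.one_le_iff_ne_zero.mpr (mul_ne_zero (hS n hn) (by omega)), ?_⟩
    rw [← hM n hn, mul_assoc]
    exact Nat.mul_le_mul_left n (by omega)
  have hdisj : (S : Set ℕ).PairwiseDisjoint T := by
    intro n₁ hn₁ n₂ hn₂ hne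
    simp only [T, Function.onFun, disjoint_left, mem_image, mem_filter, mem_Ico]
    rintro _ ⟨m₁, ⟨⟨hm₁, -⟩, hc₁⟩, rfl⟩ ⟨m₂, ⟨⟨hm₂, -⟩, hc₂⟩, heq⟩
    exact hne (hinj n₁ hn₁ n₂ hn₂ m₁ m₂ (by omega) (by omega) hc₁ hc₂ heq.symm)
  have hcount : ∑ n ∈ S, R n * Nat.totient (P n) ≤ M := calc
    _ = #(S.biUnion T) := by
      rw [card_biUnion hdisj]
      exact sum_congr rfl fun n hn => (hcard n hn).symm
    _ ≤ #(Icc 1 M) := card_le_card hsub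
    _ = M := by simp
  calc ∑ n ∈ S, (Nat.totient (P n) : ℝ) / (n * P n)
      = ∑ n ∈ S, ((R n * Nat.totient (P n) : ℕ) : ℝ) / M := sum_congr rfl fun n hn => by
        rw [← hM n hn]
        push_cast
        rw [mul_comm _ (R n : ℝ), mul_div_mul_left _ _ (by exact_mod_cast hR n hn)]
    _ = ((∑ n ∈ S, R n * Nat.totient (P n) : ℕ) : ℝ) / M := by rw [← sum_div, Nat.cast_sum]
    _ ≤ 1 := div_le_one_of_le₀ (by exact_mod_cast hcount) M.cast_nonneg

theorem ENNReal.lt_of_coprime_primorial_floor {y : ℝ≥0∞} (hy : y ≠ ∞) {m p : ℕ}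
    (h : (primorial ⌊y.toReal⌋₊).Coprime m) (hp : p ∈ m.primeFactors) : y < p := by
  have hlt := (Nat.floor_lt ENNReal.toReal_nonneg).mp (Nat.lt_of_coprime_primorial h hp)
  rwa [← ENNReal.toReal_natCast, ENNReal.toReal_lt_toReal hy (ENNReal.natCast_ne_top p)] at hlt

theorem Lterm_eq (θ : ℕ → ℝ≥0∞) (n : ℕ) :
    Lterm θ n = if Bmem θ n ∧ θ n ≠ ∞ then
      (Nat.totient (primorial ⌊(θ n).toReal⌋₊) : ℝ) / (n * primorial ⌊(θ n).toReal⌋₊) else 0 := by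
  by_cases hB : Bmem θ n
  · by_cases hfin : θ n = ∞
    · simp [Lterm, eulerWeight, hfin]
    · rw [Lterm, eulerWeight, if_pos hB, if_neg hfin, if_pos ⟨hB, hfin⟩,
        ← Nat.primesLE_eq_filter_range, ← Nat.totient_primorial_div_primorial, div_mul_div_comm,
        one_mul]
  · simp [Lterm, hB]

theorem Lterm_nonneg (θ : ℕ → ℝ≥0∞) (n : ℕ) : 0 ≤ Lterm θ n := by
  rw [Lterm_eq]
  split_ifs <;> positivity

theorem sum_Lterm_le_one {θ : ℕ → ℝ≥0∞} (hθ : ThetaOK θ) (s : Finset ℕ) :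
    ∑ n ∈ s, Lterm θ n ≤ 1 := by
  simp_rw [Lterm_eq, ← sum_filter]
  refine sum_totient_div_mul_le_one (fun n hn => (mem_filter.mp hn).2.1.1.ne')
    (fun _ _ => primorial_ne_zero _) fun n₁ hn₁ n₂ hn₂ m₁ m₂ hm₁ hm₂ hc₁ hc₂ heq => ?_
  obtain ⟨-, hB₁, hfin₁⟩ := mem_filter.mp hn₁
  obtain ⟨-, hB₂, hfin₂⟩ := mem_filter.mp hn₂
  exact Bmem.eq_of_mul_eq_mul hθ hB₁ hB₂ hm₁ hm₂
    (fun _ => ENNReal.lt_of_coprime_primorial_floor hfin₁ hc₁)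
    (fun _ => ENNReal.lt_of_coprime_primorial_floor hfin₂ hc₂) heq

theorem stmt5 (θ : ℕ → ℝ≥0∞) (hθ : ThetaOK θ) :
    (∀ N : ℕ, 1 ≤ N → ∑ n ∈ Finset.Icc 1 N, Lterm θ n ≤ 1) ∧
      ∃ L : ℝ, 0 ≤ L ∧ L ≤ 1 ∧ HasSum (Lterm θ) L := by
  have hsum := sum_Lterm_le_one hθ
  have hsummable : Summable (Lterm θ) := summable_of_sum_le (Lterm_nonneg θ) hsum
  exact ⟨fun N _ => hsum _, _, tsum_nonneg (Lterm_nonneg θ), hsummable.tsum_le_of_sum_le hsum,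
    hsummable.hasSum⟩
end
end

section
/- Let θ satisfy θ(1) ≥ 2, θ(n) ≥ P⁺(n) for n ≥ 2. Then the following are equivalent: (a) B(x) ∼ x as x → ∞; (b) L = 0; (c) θ(n) = ∞ for all n ≥ 1; (d) B(x) = ⌊x⌋ for all x, i.e. 𝔅 = ℕ. -/
open scoped Classical ENNReal

noncomputable section

/-!
Everything reduces to (c). If `θ = ∞` on `𝔅`, then every `n ≥ 1` lies in `𝔅` by strong
induction, because each prefix `p₁^α₁ ⋯ p_j^α_j` of the factorization of `n` is a smaller
positive integer. Hence (c) gives `𝔅 = ℕ`, that is (d), and then (a); and since the terms of `L`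
are nonnegative, `L = 0` says exactly that `θ = ∞` on `𝔅`, which is (c).

Conversely, if `θ(m) < ∞` for some `m ≥ 1`, choose `T ≥ θ(m), P⁺(m)`. For `k ≥ 1` the least prime
factor `p` of `1 + k T!` exceeds `T`, and the prefix of `m (1 + k T!)` below `p` is `m`, so the
condition `p ≤ θ(m)` fails. The progression `m + k m T!` thus misses `𝔅`, and a progression has
positive density, so `B(x) ∼ x` fails.
-/

def factorizationPrefix (n p : ℕ) : ℕ :=
  ∏ q ∈ n.primeFactors.filter (fun q => q < p), q ^ n.factorization q

theorem bmem_iff {θ : ℕ → ℝ≥0∞} {n : ℕ} :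
    Bmem θ n ↔ 0 < n ∧ ∀ p ∈ n.primeFactors, (p : ℝ≥0∞) ≤ θ (factorizationPrefix n p) :=
  Iff.rfl

section FactorizationPrefix

theorem factorizationPrefix_pos (n p : ℕ) : 0 < factorizationPrefix n p :=
  Finset.prod_pos fun _ hq =>
    pow_pos (Nat.prime_of_mem_primeFactors (Finset.mem_filter.1 hq).1).pos _

theorem factorizationPrefix_dvd {n : ℕ} (hn : n ≠ 0) (p : ℕ) : factorizationPrefix n p ∣ n := by
  conv_rhs => rw [← Nat.prod_factorization_pow_eq_self hn]
  rw [Finsupp.prod, Nat.support_factorization]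
  exact Finset.prod_dvd_prod_of_subset _ _ _ (Finset.filter_subset _ _)

theorem not_dvd_factorizationPrefix {p : ℕ} (hp : p.Prime) (n : ℕ) :
    ¬ p ∣ factorizationPrefix n p := by
  rw [factorizationPrefix, Prime.dvd_finsetProd_iff hp.prime]
  rintro ⟨q, hq, hpq⟩
  obtain ⟨hqn, hqp⟩ := Finset.mem_filter.1 hq
  have := (Nat.prime_dvd_prime_iff_eq hp (Nat.prime_of_mem_primeFactors hqn)).1
    (hp.dvd_of_dvd_pow hpq)
  omega

theorem factorizationPrefix_lt {n p : ℕ} (hp : p ∈ n.primeFactors) :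
    factorizationPrefix n p < n := by
  obtain ⟨hpp, hpn, hn⟩ := Nat.mem_primeFactors.1 hp
  refine lt_of_le_of_ne (Nat.le_of_dvd (by omega) (factorizationPrefix_dvd hn p)) ?_
  intro h
  exact not_dvd_factorizationPrefix hpp n (by rwa [h])

theorem factorizationPrefix_mul {m r q : ℕ} (hm : m ≠ 0) (hr : r ≠ 0)
    (hq : ∀ b ∈ r.primeFactors, q ≤ b) :
    factorizationPrefix (m * r) q = factorizationPrefix m q := by
  rw [factorizationPrefix, Nat.primeFactors_mul hm hr, Finset.filter_union,
    Finset.filter_false_of_mem fun b hb => not_lt.2 (hq b hb), Finset.union_empty]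
  refine Finset.prod_congr rfl fun a ha => ?_
  have har : r.factorization a = 0 :=
    Finsupp.notMem_support_iff.1 fun h => absurd (hq a (Nat.support_factorization r ▸ h))
      (not_le.2 (Finset.mem_filter.1 ha).2)
  rw [Nat.factorization_mul hm hr, Finsupp.add_apply, har, add_zero]

theorem factorizationPrefix_eq_self {m q : ℕ} (hm : m ≠ 0) (hq : ∀ a ∈ m.primeFactors, a < q) :
    factorizationPrefix m q = m := by
  conv_rhs => rw [← Nat.prod_factorization_pow_eq_self hm]
  rw [factorizationPrefix, Finset.filter_true_of_mem hq, Finsupp.prod, Nat.support_factorization]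

end FactorizationPrefix

section Membership

variable {θ : ℕ → ℝ≥0∞}

theorem bmem_of_forall_bmem_eq_top (H : ∀ m, Bmem θ m → θ m = ∞) {n : ℕ} (hn : 0 < n) :
    Bmem θ n := by
  induction n using Nat.strong_induction_on with
  | _ n ih =>
    refine bmem_iff.2 ⟨hn, fun p hp => ?_⟩
    rw [H _ (ih _ (factorizationPrefix_lt hp) (factorizationPrefix_pos n p))]
    exact le_top

theorem forall_bmem_eq_top_iff :
    (∀ m, Bmem θ m → θ m = ∞) ↔ ∀ n, 1 ≤ n → θ n = ∞ :=
  ⟨fun H _ hn => H _ (bmem_of_forall_bmem_eq_top H hn), fun H m hm => H m hm.1⟩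

theorem not_bmem_mul {m r : ℕ} (hm : 0 < m) (hr : 1 < r)
    (hθ : ∀ b ∈ r.primeFactors, θ m < b)
    (hmr : ∀ a ∈ m.primeFactors, ∀ b ∈ r.primeFactors, a < b) :
    ¬ Bmem θ (m * r) := by
  intro hB
  set p := r.minFac
  have hpr : p ∈ r.primeFactors :=
    Nat.mem_primeFactors.2 ⟨Nat.minFac_prime hr.ne', r.minFac_dvd, by omega⟩
  have hprefix : factorizationPrefix (m * r) p = m := by
    rw [factorizationPrefix_mul hm.ne' (by omega) fun b hb =>
      Nat.minFac_le_of_dvd (Nat.prime_of_mem_primeFactors hb).two_le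
        (Nat.dvd_of_mem_primeFactors hb)]
    exact factorizationPrefix_eq_self hm.ne' fun a ha => hmr a ha p hpr
  have hp : p ∈ (m * r).primeFactors := by
    rw [Nat.primeFactors_mul hm.ne' (by omega)]
    exact Finset.mem_union_right _ hpr
  have := (bmem_iff.1 hB).2 p hp
  rw [hprefix] at this
  exact (hθ p hpr).not_ge this

theorem lt_of_mem_primeFactors_one_add_mul_factorial {T k b : ℕ}
    (hb : b ∈ (1 + k * T.factorial).primeFactors) : T < b := by
  obtain ⟨hbp, hbd, -⟩ := Nat.mem_primeFactors.1 hb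
  by_contra! hbT
  have hkT : b ∣ k * T.factorial := (Nat.dvd_factorial hbp.pos hbT).mul_left k
  exact hbp.one_lt.ne' (Nat.dvd_one.1 ((Nat.dvd_add_left hkT).1 hbd))

theorem exists_progression_not_bmem {m : ℕ} (hm : 0 < m) (hθm : θ m ≠ ∞) :
    ∃ Q > 0, ∀ k, 1 ≤ k → ¬ Bmem θ (m + k * Q) := by
  set T := max ⌈(θ m).toReal⌉₊ (maxPrimeFac m)
  refine ⟨m * T.factorial, Nat.mul_pos hm T.factorial_pos, fun k hk => ?_⟩
  have hT : ∀ b ∈ (1 + k * T.factorial).primeFactors, T < b := fun b hb =>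
    lt_of_mem_primeFactors_one_add_mul_factorial hb
  rw [show m + k * (m * T.factorial) = m * (1 + k * T.factorial) by ring]
  refine not_bmem_mul hm (by nlinarith [T.factorial_pos]) (fun b hb => ?_) (fun a ha b hb => ?_)
  · have hθT : θ m ≤ T := by
      rw [← ENNReal.ofReal_toReal hθm, ← ENNReal.ofReal_natCast]
      exact ENNReal.ofReal_le_ofReal
        ((Nat.le_ceil _).trans (by exact_mod_cast le_max_left _ _))
    exact hθT.trans_lt (by exact_mod_cast hT b hb)
  · exact ((Finset.le_sup (f := id) ha).trans (le_max_right _ _)).trans_lt (hT b hb)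

end Membership

section Density

variable (P : ℕ → Prop) [DecidablePred P] {a Q : ℕ}

theorem card_filter_Icc_add_le (hP : ∀ k, 1 ≤ k → ¬ P (a + k * Q)) (hQ : 0 < Q) (n : ℕ) :
    ((Finset.Icc 1 (a + n * Q)).filter P).card + n ≤ a + n * Q := by
  set progression := (Finset.Icc 1 n).image fun k => a + k * Q
  have hcard : progression.card = n := by
    rw [Finset.card_image_of_injective _ fun i j h => by
      simpa [hQ.ne'] using (Nat.add_left_cancel h : i * Q = j * Q),
      Nat.card_Icc, Nat.add_sub_cancel]
  have hsub : progression ⊆ Finset.Icc 1 (a + n * Q) := by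
    simp only [progression, Finset.image_subset_iff, Finset.mem_Icc]
    intro k hk
    constructor <;> nlinarith [hk.1, hk.2]
  have hdisj : Disjoint ((Finset.Icc 1 (a + n * Q)).filter P) progression := by
    rw [Finset.disjoint_right]
    simp only [progression, Finset.mem_image, Finset.mem_Icc, Finset.mem_filter]
    rintro _ ⟨k, hk, rfl⟩ ⟨-, hPk⟩
    exact hP k hk.1 hPk
  have := Finset.card_union_of_disjoint hdisj ▸
    Finset.card_le_card (Finset.union_subset (Finset.filter_subset _ _) hsub)
  rwa [hcard, Nat.card_Icc, Nat.add_sub_cancel] at this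

/-- Along `x = a + nQ` the proportion is at most `1 - n / (a + nQ)`, which is `≤ 1 - 1/(2Q)`
as soon as `nQ ≥ a`. -/
theorem not_tendsto_card_filter_Icc_div (hP : ∀ k, 1 ≤ k → ¬ P (a + k * Q)) (hQ : 0 < Q) :
    ¬ Filter.Tendsto (fun x : ℝ => (((Finset.Icc 1 ⌊x⌋₊).filter P).card : ℝ) / x)
      Filter.atTop (nhds 1) := by
  intro h
  have hx : Filter.Tendsto (fun n : ℕ => ((a + n * Q : ℕ) : ℝ)) Filter.atTop Filter.atTop :=
    tendsto_natCast_atTop_atTop.comp (Filter.tendsto_atTop_mono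
      (fun n => by nlinarith : ∀ n : ℕ, n ≤ a + n * Q) Filter.tendsto_id)
  have hbound : ∀ᶠ n : ℕ in Filter.atTop,
      (((Finset.Icc 1 ⌊((a + n * Q : ℕ) : ℝ)⌋₊).filter P).card : ℝ) / ((a + n * Q : ℕ) : ℝ)
        ≤ 1 - 1 / (2 * Q) := by
    filter_upwards [Filter.eventually_ge_atTop (max a 1)] with n hn
    have hcount : (((Finset.Icc 1 (a + n * Q)).filter P).card : ℝ) + n ≤ a + n * Q := by
      exact_mod_cast card_filter_Icc_add_le P hP hQ n
    rw [Nat.floor_natCast]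
    have hn1 : (1 : ℝ) ≤ n := by exact_mod_cast (le_max_right _ _).trans hn
    have han : (a : ℝ) ≤ n * Q := by
      exact_mod_cast (le_max_left _ _).trans (hn.trans (Nat.le_mul_of_pos_right n hQ))
    have hQ1 : (1 : ℝ) ≤ Q := by exact_mod_cast hQ
    rw [div_le_iff₀ (by push_cast; positivity)]
    push_cast
    rw [show (1 - 1 / (2 * Q)) * ((a : ℝ) + n * Q) = a + n * Q - (a + n * Q) / (2 * Q) by ring]
    have : ((a : ℝ) + n * Q) / (2 * Q) ≤ n := by
      rw [div_le_iff₀ (by positivity)]; nlinarith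
    linarith
  have := le_of_tendsto (h.comp hx) hbound
  have : (0 : ℝ) < 1 / (2 * Q) := by positivity
  linarith

end Density

section Series

theorem eulerWeight_pos {y : ℝ≥0∞} (hy : y ≠ ∞) : 0 < eulerWeight y := by
  rw [eulerWeight, if_neg hy]
  refine Finset.prod_pos fun p hp => ?_
  have hp : (1 : ℝ) < p := by exact_mod_cast (Finset.mem_filter.1 hp).2.one_lt
  exact sub_pos.2 ((div_lt_one (by linarith)).2 hp)

theorem eulerWeight_nonneg (y : ℝ≥0∞) : 0 ≤ eulerWeight y := by
  rcases eq_or_ne y ∞ with rfl | hy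
  · rw [eulerWeight, if_pos rfl]
  · exact (eulerWeight_pos hy).le

variable {θ : ℕ → ℝ≥0∞}

theorem lterm_nonneg (n : ℕ) : 0 ≤ Lterm θ n :=
  mul_nonneg (by split_ifs <;> positivity) (eulerWeight_nonneg _)

theorem lterm_eq_zero_iff {n : ℕ} : Lterm θ n = 0 ↔ (Bmem θ n → θ n = ∞) := by
  rw [Lterm]
  split_ifs with hn
  · have : (1 : ℝ) / n ≠ 0 := one_div_ne_zero (Nat.cast_ne_zero.2 hn.1.ne')
    rw [mul_eq_zero, or_iff_right this, imp_iff_right hn]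
    refine ⟨fun h => by_contra fun hfin => (eulerWeight_pos hfin).ne' h, fun h => ?_⟩
    rw [h, eulerWeight, if_pos rfl]
  · simp only [zero_mul, true_iff]
    exact fun h => absurd h hn

theorem hasSum_lterm_eq_zero_iff {L : ℝ} (hL : HasSum (Lterm θ) L) :
    L = 0 ↔ ∀ n, 1 ≤ n → θ n = ∞ := by
  rw [← forall_bmem_eq_top_iff]
  simp only [← lterm_eq_zero_iff]
  refine ⟨fun h => ?_, fun h => hL.unique (by simp [funext h])⟩
  subst h
  exact congrFun ((hasSum_zero_iff_of_nonneg lterm_nonneg).1 hL)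

end Series

section Counting

variable {θ : ℕ → ℝ≥0∞}

theorem bcount_eq_floor (h : ∀ n, 1 ≤ n → θ n = ∞) (x : ℝ) : Bcount θ x = ⌊x⌋₊ := by
  rw [Bcount, Finset.filter_true_of_mem fun n hn => bmem_of_forall_bmem_eq_top
    (forall_bmem_eq_top_iff.2 h) (Finset.mem_Icc.1 hn).1, Nat.card_Icc, Nat.add_sub_cancel]

theorem isEquivalent_bcount (h : ∀ x : ℝ, Bcount θ x = ⌊x⌋₊) :
    Asymptotics.IsEquivalent Filter.atTop (fun x : ℝ => (Bcount θ x : ℝ)) (fun x => x) := by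
  simpa only [h] using Asymptotics.isEquivalent_nat_floor

theorem eq_top_of_isEquivalent_bcount
    (h : Asymptotics.IsEquivalent Filter.atTop (fun x : ℝ => (Bcount θ x : ℝ)) (fun x => x)) :
    ∀ n, 1 ≤ n → θ n = ∞ := by
  intro n hn
  by_contra hθn
  obtain ⟨Q, hQ, hprog⟩ := exists_progression_not_bmem hn hθn
  exact not_tendsto_card_filter_Icc_div (Bmem θ) hprog hQ
    ((Asymptotics.isEquivalent_iff_tendsto_one (Filter.eventually_ne_atTop 0)).1 h)

end Counting

theorem stmt7_general (θ : ℕ → ℝ≥0∞) (L : ℝ) (hL : HasSum (Lterm θ) L) :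
    (Asymptotics.IsEquivalent Filter.atTop (fun x : ℝ => (Bcount θ x : ℝ)) (fun x : ℝ => x)
        ↔ L = 0) ∧
      (L = 0 ↔ ∀ n : ℕ, 1 ≤ n → θ n = ∞) ∧
      ((∀ n : ℕ, 1 ≤ n → θ n = ∞) ↔ ∀ x : ℝ, Bcount θ x = ⌊x⌋₊) := by
  have hbc : L = 0 ↔ ∀ n : ℕ, 1 ≤ n → θ n = ∞ := hasSum_lterm_eq_zero_iff hL
  have hcd := bcount_eq_floor (θ := θ)
  have hda := isEquivalent_bcount (θ := θ)
  have hac := eq_top_of_isEquivalent_bcount (θ := θ)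
  exact ⟨⟨hbc.2 ∘ hac, hda ∘ hcd ∘ hbc.1⟩, hbc, ⟨hcd, hac ∘ hda⟩⟩

theorem stmt7 (θ : ℕ → ℝ≥0∞) (hθ : ThetaOK θ) (L : ℝ) (hL : HasSum (Lterm θ) L) :
    (Asymptotics.IsEquivalent Filter.atTop (fun x : ℝ => (Bcount θ x : ℝ)) (fun x : ℝ => x)
        ↔ L = 0) ∧
      (L = 0 ↔ ∀ n : ℕ, 1 ≤ n → θ n = ∞) ∧
      ((∀ n : ℕ, 1 ≤ n → θ n = ∞) ↔ ∀ x : ℝ, Bcount θ x = ⌊x⌋₊) :=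
  stmt7_general θ L hL
end
end
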